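/- Let X be a Polish Abelian group and let A be a Borel subset of X which is null-finite. Then A is both Haar-null and Haar-meager in X. -/

import Mathlib

open Set Filter Topology Pointwise MeasureTheory

/-- A Borel set `A` in a topological Abelian group is *Haar-meager* if there is a continuous
map `f` from the Cantor cube `ℕ → Bool` such that `f ⁻¹' (A + x)` is meager for every `x`. -/
def HaarMeager {X : Type*} [TopologicalSpace X] [AddCommGroup X] (A : Set X) : Prop :=
  ∃ f : (ℕ → Bool) → X, Continuous f ∧ ∀ x : X, IsMeagre (f ⁻¹' ((fun a => a + x) '' A))

/-- A set `A` is *Haar-null* if there is a Borel probability measure `μ` on `X` such that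
`μ (A + x) = 0` for every `x ∈ X`. -/
def HaarNull {X : Type*} [MeasurableSpace X] [AddCommGroup X] (A : Set X) : Prop :=
  ∃ μ : Measure X, IsProbabilityMeasure μ ∧ ∀ x : X, μ ((fun a => a + x) '' A) = 0

/-- A subset `T` of the Cantor cube is *thin* if for every coordinate `n`, any two elements
of `T` agreeing at all coordinates except possibly `n` are equal. -/
def IsThinSet (T : Set (ℕ → Bool)) : Prop :=
  ∀ n : ℕ, ∀ s ∈ T, ∀ t ∈ T, (∀ m : ℕ, m ≠ n → s m = t m) → s = t

/-- A set `A` is *Haar-thin* if there is a continuous map `f` from the Cantor cube such that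
`f ⁻¹' (A + x)` is thin for every `x`. -/
def HaarThin {X : Type*} [TopologicalSpace X] [AddCommGroup X] (A : Set X) : Prop :=
  ∃ f : (ℕ → Bool) → X, Continuous f ∧ ∀ x : X, IsThinSet (f ⁻¹' ((fun a => a + x) '' A))

/-- A set `A` is *null-finite* if there is a null sequence `(x n)` such that
`{n | x n + y ∈ A}` is finite for every `y`. -/
def NullFinite {X : Type*} [TopologicalSpace X] [AddCommGroup X] (A : Set X) : Prop :=
  ∃ x : ℕ → X, Tendsto x atTop (nhds 0) ∧ ∀ y : X, {n : ℕ | x n + y ∈ A}.Finite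

/-- A set `A` is *Haar-open* if for every compact `K` and `p ∈ K` there is `x` such that
`K ∩ (A + x)` is a neighborhood of `p` in the subspace `K`. -/
def HaarOpen {X : Type*} [TopologicalSpace X] [AddCommGroup X] (A : Set X) : Prop :=
  ∀ K : Set X, IsCompact K → ∀ p ∈ K, ∃ x : X,
    K ∩ ((fun a => a + x) '' A) ∈ nhdsWithin p K

/-!
Pass to a subsequence `x ∘ k` of the null sequence such that adding `x (k n)` moves every partial
sum `∑_{i < n, s i} x (k i)` by less than `2⁻ⁿ`; this is possible because these partial sums lie
in a compact set. Then the sums `f s = ∑_{s i} x (k i)` converge and define a continuous map `f`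
on the Cantor cube with `f (update s n true) = f s + x (k n)` whenever `s n = false`.
Null-finiteness of `A` then says that for every `y` and every `c`, switching on a zero
coordinate `n` of `c` lands in `T = f ⁻¹' (A + y)` for only finitely many `n`.

Such a Borel set `T` is Haar-null: the sets `{c | c n = false ∧ update c n true ∈ T}` have
measure tending to `0`, yet by invariance they have the same measure as `T ∩ {c | c n = true}`,
which tends to `μ T / 2` since cylinder sets are dense in the measure algebra. It is meagre: if
`T` were comeagre in a nonempty open `U`, a generic point of `U` would have infinitely many zero
coordinates, and switching on any late one keeps it in `U` and, generically, puts it in `T`.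
-/

open Function

section CantorPartialSum

variable {X : Type*} [AddCommMonoid X]

def cantorPartialSum (z : ℕ → X) (s : ℕ → Bool) (n : ℕ) : X :=
  ∑ i ∈ Finset.range n, if s i then z i else 0

lemma cantorPartialSum_succ (z : ℕ → X) (s : ℕ → Bool) (n : ℕ) :
    cantorPartialSum z s (n + 1) = cantorPartialSum z s n + if s n then z n else 0 :=
  Finset.sum_range_succ _ _

lemma cantorPartialSum_update_true {z : ℕ → X} {s : ℕ → Bool} {n m : ℕ} (hs : s n = false)
    (hnm : n < m) : cantorPartialSum z (update s n true) m = cantorPartialSum z s m + z n := by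
  have hsummand i : (if update s n true i then z i else 0) =
      (if s i then z i else 0) + (Pi.single n (z n) : ℕ → X) i := by
    rcases eq_or_ne i n with rfl | hi
    · simp [hs]
    · simp [hi]
  rw [cantorPartialSum, Finset.sum_congr rfl fun i _ => hsummand i, Finset.sum_add_distrib,
    Finset.sum_pi_single', if_pos (Finset.mem_range.2 hnm), cantorPartialSum]

lemma continuous_cantorPartialSum [TopologicalSpace X] [ContinuousAdd X] (z : ℕ → X) (n : ℕ) :
    Continuous fun s => cantorPartialSum z s n :=
  continuous_finsetSum _ fun i _ =>
    (continuous_of_discreteTopology (f := fun b : Bool => if b then z i else 0)).comp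
      (continuous_apply i)

end CantorPartialSum

lemma IsCompact.eventually_forall_dist_add_lt {X : Type*} [PseudoMetricSpace X] [AddZeroClass X]
    [ContinuousAdd X] {C : Set X} (hC : IsCompact C) {ε : ℝ} (hε : 0 < ε) :
    ∀ᶠ y in 𝓝 0, ∀ p ∈ C, dist (p + y) p < ε :=
  hC.eventually_forall_of_forall_eventually fun p _ =>
    ContinuousAt.eventually_lt (f := fun q : X × X => dist (q.2 + q.1) q.2) (by fun_prop)
      continuousAt_const (by simpa using hε)

lemma exists_strictMono_dist_cantorPartialSum_add_lt {X : Type*} [PseudoMetricSpace X]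
    [AddCommMonoid X] [ContinuousAdd X] {x : ℕ → X} (hx : Tendsto x atTop (𝓝 0)) :
    ∃ k : ℕ → ℕ, StrictMono k ∧ ∀ s n,
      dist (cantorPartialSum (x ∘ k) s n + x (k n)) (cantorPartialSum (x ∘ k) s n) <
        (1 / 2) ^ n := by
  set K := insert 0 (range x)
  set C : ℕ → Set X := fun n =>
    (fun g : ℕ → X => ∑ i ∈ Finset.range n, g i) '' univ.pi fun _ => K
  have hC n : IsCompact (C n) := (isCompact_univ_pi fun _ => hx.isCompact_insert_range).image
    (continuous_finsetSum _ fun i _ => continuous_apply i)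
  obtain ⟨k, hk, hkC⟩ := extraction_forall_of_eventually fun n =>
    hx.eventually ((hC n).eventually_forall_dist_add_lt (by positivity : (0 : ℝ) < (1 / 2) ^ n))
  refine ⟨k, hk, fun s n =>
    hkC n _ ⟨fun i => if s i then x (k i) else 0, fun i _ => ?_, rfl⟩⟩
  dsimp only
  split_ifs
  exacts [mem_insert_of_mem _ (mem_range_self _), mem_insert _ _]

lemma exists_continuous_update_true_eq_add {X : Type*} [MetricSpace X] [CompleteSpace X]
    [AddCommMonoid X] [ContinuousAdd X] {z : ℕ → X}
    (hz : ∀ s n, dist (cantorPartialSum z s n + z n) (cantorPartialSum z s n) ≤ (1 / 2) ^ n) :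
    ∃ f : (ℕ → Bool) → X, Continuous f ∧
      ∀ s n, s n = false → f (update s n true) = f s + z n := by
  have hstep s n :
      dist (cantorPartialSum z s n) (cantorPartialSum z s (n + 1)) ≤ 1 * (1 / 2) ^ n := by
    rw [cantorPartialSum_succ, one_mul]
    cases s n
    · simp
    · simpa [dist_comm] using hz s n
  choose f hf using fun s => cauchySeq_tendsto_of_complete
    (cauchySeq_of_le_geometric _ _ (by norm_num) (hstep s))
  have hdist s n : dist (cantorPartialSum z s n) (f s) ≤ 2 * (1 / 2) ^ n := by
    have := dist_le_of_le_geometric_of_tendsto _ _ (by norm_num) (hstep s) (hf s) n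
    norm_num at this ⊢
    linarith
  refine ⟨f, ?_, fun s n hs => ?_⟩
  · refine (Metric.tendstoUniformly_iff.2 fun ε hε => ?_).continuous
      (Eventually.of_forall (f := atTop) (continuous_cantorPartialSum z)).frequently
    have hgeom : Tendsto (fun n : ℕ => 2 * (1 / 2 : ℝ) ^ n) atTop (𝓝 0) := by
      simpa using (tendsto_pow_atTop_nhds_zero_of_lt_one (r := (1 / 2 : ℝ)) (by norm_num)
        (by norm_num)).const_mul 2
    filter_upwards [hgeom.eventually (gt_mem_nhds hε)] with n hn s
    rw [dist_comm]
    exact (hdist s n).trans_lt hn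
  · refine tendsto_nhds_unique (hf (update s n true)) (((hf s).add_const (z n)).congr' ?_)
    filter_upwards [eventually_gt_atTop n] with m hm
    exact (cantorPartialSum_update_true hs hm).symm

theorem exists_continuous_update_true_eq_add_of_tendsto_zero {X : Type*} [TopologicalSpace X]
    [TopologicalSpace.IsCompletelyMetrizableSpace X] [AddCommMonoid X] [ContinuousAdd X]
    {x : ℕ → X} (hx : Tendsto x atTop (𝓝 0)) :
    ∃ (f : (ℕ → Bool) → X) (k : ℕ → ℕ), Continuous f ∧ StrictMono k ∧
      ∀ s n, s n = false → f (update s n true) = f s + x (k n) := by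
  let := TopologicalSpace.upgradeIsCompletelyMetrizable X
  obtain ⟨k, hk, hdist⟩ := exists_strictMono_dist_cantorPartialSum_add_lt hx
  obtain ⟨f, hf, hflip⟩ := exists_continuous_update_true_eq_add fun s n => (hdist s n).le
  exact ⟨f, k, hf, hk, hflip⟩

section CantorCube

lemma tendsto_update_atTop_nhds {α : Type*} [TopologicalSpace α] (c : ℕ → α) (b : α) :
    Tendsto (fun n => update c n b) atTop (𝓝 c) :=
  tendsto_pi_nhds.2 fun i => tendsto_const_nhds.congr' <|
    (eventually_gt_atTop i).mono fun _ hn => (update_of_ne hn.ne _ _).symm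

lemma isMeagre_setOf_eventually_ne {α : Type*} [TopologicalSpace α] [DiscreteTopology α]
    (b : α) : IsMeagre {c : ℕ → α | ∀ᶠ n in atTop, c n ≠ b} := by
  have hcompl :
      {c : ℕ → α | ∀ᶠ n in atTop, c n ≠ b}ᶜ = ⋂ m, ⋃ n ≥ m, {c | c n = b} := by
    ext c
    simp
  rw [IsMeagre, hcompl]
  refine countable_iInter_mem.2 fun m => residual_of_dense_open
    (isOpen_biUnion fun n _ => (continuous_apply (A := fun _ : ℕ => α) n).isOpen_preimage {b}
      (isOpen_discrete _)) ?_
  refine fun c => mem_closure_of_tendsto (tendsto_update_atTop_nhds c b) ?_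
  filter_upwards [eventually_ge_atTop m] with n hn
  exact mem_biUnion hn (update_self n b c :)

-- `Bool` is a Boolean ring, so `+` on the Cantor cube is coordinatewise `xor`.
lemma single_true_add_eq_update (n : ℕ) (c : ℕ → Bool) :
    Pi.single n true + c = update c n (!c n) := by
  funext i
  rcases eq_or_ne i n with rfl | hi
  · rw [Pi.add_apply, Pi.single_eq_same, update_self]
    exact Bool.true_xor (c i)
  · simp [hi]

lemma preimage_single_true_add_inter_setOf_eq_true (n : ℕ) (T : Set (ℕ → Bool)) :
    (Pi.single n true + ·) ⁻¹' (T ∩ {c | c n = true}) =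
      {c | c n = false ∧ update c n true ∈ T} := by
  ext c
  cases h : c n <;> simp [single_true_add_eq_update, h, and_comm]

end CantorCube

section HaarNull

variable (μ : Measure (ℕ → Bool)) [IsFiniteMeasure μ] [μ.IsAddLeftInvariant]

lemma measurableSet_setOf_eq_true (n : ℕ) : MeasurableSet {c : ℕ → Bool | c n = true} :=
  measurableSet_eq_fun (measurable_pi_apply n) measurable_const

lemma measureReal_inter_setOf_eq_true_of_preimage_eq {S : Set (ℕ → Bool)} {n : ℕ}
    (hSn : (Pi.single n true + ·) ⁻¹' S = S) :
    μ.real (S ∩ {c | c n = true}) = μ.real S / 2 := by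
  have hflip : (Pi.single n true + ·) ⁻¹' (S ∩ {c | c n = true}) = S \ {c | c n = true} := by
    rw [preimage_inter, hSn]
    ext c
    simp [single_true_add_eq_update]
  have hsymm : μ.real (S \ {c | c n = true}) = μ.real (S ∩ {c | c n = true}) := by
    rw [← hflip, Measure.real, Measure.real, measure_preimage_add]
  have := measureReal_inter_add_sdiff (μ := μ) (s := S) (measurableSet_setOf_eq_true n)
  linarith

lemma preimage_single_true_add_cylinder {s : Finset ℕ} {n : ℕ} (hn : n ∉ s)
    (S : Set (s → Bool)) :
    (Pi.single n true + ·) ⁻¹' cylinder (α := fun _ => Bool) s S = cylinder s S := by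
  ext c
  suffices s.restrict (Pi.single n true + c) = s.restrict c by
    simp only [mem_preimage, mem_cylinder, this]
  funext ⟨i, hi⟩
  simp [ne_of_mem_of_not_mem hi hn]

lemma tendsto_measureReal_inter_setOf_eq_true {S : Set (ℕ → Bool)} (hS : MeasurableSet S) :
    Tendsto (fun n => μ.real (S ∩ {c | c n = true})) atTop (𝓝 (μ.real S / 2)) := by
  let F : ℕ → MeasuredSets μ → ℝ := fun n t => μ.real (t ∩ {c | c n = true})
  have hF : Equicontinuous F := by
    refine (LipschitzWith.uniformEquicontinuous F 1 fun n =>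
      LipschitzWith.of_dist_le_mul fun t t' => ?_).equicontinuous
    rw [NNReal.coe_one, one_mul, Real.dist_eq, MeasuredSets.dist_def]
    refine (abs_measureReal_sub_le_measureReal_symmDiff
      (t.2.inter (measurableSet_setOf_eq_true n)).nullMeasurableSet
      (t'.2.inter (measurableSet_setOf_eq_true n)).nullMeasurableSet).trans (measureReal_mono ?_)
    rw [← inter_symmDiff_distrib_right]
    exact inter_subset_left
  have hclosed := hF.isClosed_setOfPred_tendsto (l := atTop)
    (MeasuredSets.lipschitzWith_measureReal.continuous.div_const 2)
  have hcyl : SetLike.coe ⁻¹' measurableCylinders (fun _ : ℕ => Bool) ⊆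
      {t : MeasuredSets μ | Tendsto (F · t) atTop (𝓝 (μ.real t / 2))} := by
    intro t ht
    obtain ⟨s, S, -, hts⟩ := (mem_measurableCylinders _).1 ht
    refine tendsto_const_nhds.congr' ?_
    filter_upwards [eventually_gt_atTop (s.sup id)] with n hn
    have hns : n ∉ s := fun h => (Finset.le_sup (f := id) h).not_gt hn
    have hinv :
        (Pi.single n true + ·) ⁻¹' (t : Set (ℕ → Bool)) = (t : Set (ℕ → Bool)) := by
      rw [hts]
      exact preimage_single_true_add_cylinder hns S
    exact (measureReal_inter_setOf_eq_true_of_preimage_eq μ hinv).symm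
  have hdense := dense_of_generateFrom_isSetRing (μ := μ) isSetRing_measurableCylinders
    ⟨{univ}, countable_singleton _, singleton_subset_iff.2 (univ_mem_measurableCylinders _),
      by simp⟩
    generateFrom_measurableCylinders.symm
  exact hclosed.closure_subset_iff.2 hcyl (hdense ⟨S, hS⟩)

theorem measure_eq_zero_of_eventually_update_notMem {T : Set (ℕ → Bool)} (hT : MeasurableSet T)
    (h : ∀ c, ∀ᶠ n in atTop, c n = false → update c n true ∉ T) : μ T = 0 := by
  set E : ℕ → Set (ℕ → Bool) := fun n => {c | c n = false ∧ update c n true ∈ T}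
  have hE n : (Pi.single n true + ·) ⁻¹' (T ∩ {c | c n = true}) = E n :=
    preimage_single_true_add_inter_setOf_eq_true n T
  have hE0 : Tendsto (fun n => μ (E n)) atTop (𝓝 0) := by
    simpa using tendsto_measure_of_tendsto_indicator_of_isFiniteMeasure atTop μ (A := ∅)
      (fun n => hE n ▸
        (hT.inter (measurableSet_setOf_eq_true n)).preimage (measurable_const_add _))
      fun c => (h c).mono fun n hn => by simpa [E] using hn
  have hhalf : μ.real T / 2 = 0 := by
    refine tendsto_nhds_unique (tendsto_measureReal_inter_setOf_eq_true μ hT) ?_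
    have hEreal : (fun n => μ.real (T ∩ {c | c n = true})) = fun n => (μ (E n)).toReal :=
      funext fun n => by rw [← hE, Measure.real, measure_preimage_add]
    rw [hEreal, ← ENNReal.toReal_zero]
    exact (ENNReal.tendsto_toReal ENNReal.zero_ne_top).comp hE0
  exact (measureReal_eq_zero_iff).1 (by linarith)

end HaarNull

lemma IsMeagre.diff_of_eventuallyEq {Y : Type*} [TopologicalSpace Y] {s t : Set Y}
    (h : s =ᶠ[residual Y] t) : IsMeagre (s \ t) :=
  mem_of_superset h fun _ (hc : (_ ∈ s) = (_ ∈ t)) hc' => hc'.2 (hc ▸ hc'.1)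

theorem isMeagre_of_eventually_update_notMem {T : Set (ℕ → Bool)} (hT : BaireMeasurableSet T)
    (h : ∀ c, ∀ᶠ n in atTop, c n = false → update c n true ∉ T) : IsMeagre T := by
  obtain ⟨U, hU, hTU⟩ := hT.residualEq_isOpen
  have hflips : IsMeagre (⋃ n, ((Pi.single n true : ℕ → Bool) + ·) ⁻¹' (U \ T)) :=
    isMeagre_iUnion fun _ => (IsMeagre.diff_of_eventuallyEq hTU.symm).preimage_of_isOpenMap
      (continuous_const_add _) (isOpenMap_add_left _)
  have hU_subset : U ⊆ {c | ∀ᶠ n in atTop, c n ≠ false} ∪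
      ⋃ n, ((Pi.single n true : ℕ → Bool) + ·) ⁻¹' (U \ T) := by
    refine fun c hc => or_iff_not_imp_left.2 fun hfreq => ?_
    rw [mem_ofPred_eq, not_eventually] at hfreq
    obtain ⟨n, hcn, hnT, hnU⟩ := ((hfreq.mono fun _ => not_not.1).and_eventually ((h c).and
      ((tendsto_update_atTop_nhds c true).eventually (hU.mem_nhds hc)))).exists
    refine mem_iUnion.2 ⟨n, ?_⟩
    rw [mem_preimage, single_true_add_eq_update, hcn, Bool.not_false]
    exact ⟨hnU, hnT hcn⟩
  have hUmeagre : IsMeagre U := ((isMeagre_setOf_eventually_ne false).union hflips).mono hU_subset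
  exact (hUmeagre.union (.diff_of_eventuallyEq hTU)).mono (sdiff_subset_iff.1 subset_rfl)

/-- Every Borel null-finite subset of a Polish Abelian group is Haar-null and Haar-meager. -/
theorem statement14 {X : Type*} [TopologicalSpace X] [AddCommGroup X]
    [IsTopologicalAddGroup X] [PolishSpace X] [MeasurableSpace X] [BorelSpace X]
    (A : Set X) (hBorel : MeasurableSet A) (hA : NullFinite A) :
    HaarNull A ∧ HaarMeager A := by
  obtain ⟨x, hx, hfin⟩ := hA
  obtain ⟨f, k, hf, hk, hflip⟩ := exists_continuous_update_true_eq_add_of_tendsto_zero hx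
  have hmeas (y : X) : MeasurableSet ((· + y) '' A) := by
    rw [image_add_right]
    exact hBorel.preimage (measurable_add_const _)
  have hsparse (y : X) (c : ℕ → Bool) :
      ∀ᶠ n in atTop, c n = false → update c n true ∉ f ⁻¹' ((· + y) '' A) := by
    have hk_notMem := hk.tendsto_atTop.eventually
      (Nat.cofinite_eq_atTop ▸ (hfin (f c - y)).eventually_cofinite_notMem)
    filter_upwards [hk_notMem] with n hn hcn hmem
    rw [mem_preimage, hflip c n hcn, image_add_right, mem_preimage] at hmem
    exact hn (by convert hmem using 1; abel)
  let ν := Measure.addHaarMeasure (⊤ : TopologicalSpace.PositiveCompacts (ℕ → Bool))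
  have : IsProbabilityMeasure ν := ⟨by
    rw [← TopologicalSpace.PositiveCompacts.coe_top]
    exact Measure.addHaarMeasure_self⟩
  refine ⟨⟨ν.map f, Measure.isProbabilityMeasure_map hf.aemeasurable, fun y => ?_⟩,
    ⟨f, hf, fun y => ?_⟩⟩
  · rw [Measure.map_apply hf.measurable (hmeas y)]
    exact measure_eq_zero_of_eventually_update_notMem ν ((hmeas y).preimage hf.measurable)
      (hsparse y)
  · exact isMeagre_of_eventually_update_notMem
      ((hmeas y).preimage hf.measurable).baireMeasurableSet (hsparse y)
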